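/- Let 0<p<1 and q=1−p. In a random graph order on the positive integers ℕ with parameter p, for every k≥1 the probability that k is related to every element m<k (i.e., m ≺_ω k for all 1≤m<k) equals λ_{k−1}(q)=∏_{i=1}^{k−1}(1−q^i). -/

import Mathlib

open MeasureTheory ProbabilityTheory
open scoped ENNReal

/-- The index set of potential edges of a random graph order on `ℕ = {1, 2, 3, …}`:
pairs `(i, j)` with `1 ≤ i < j`. -/
abbrev GraphOrderEdge : Type := {ij : ℕ × ℕ // 1 ≤ ij.1 ∧ ij.1 < ij.2}

/-- The random graph order relation `≺_ω`: the transitive closure of the relation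
`{(i, j) : 1 ≤ i < j and ω(i, j) = 1}`. -/
def GraphOrderRel (ω : GraphOrderEdge → Bool) (a b : ℕ) : Prop :=
  Relation.TransGen (fun x y => ∃ h : 1 ≤ x ∧ x < y, ω ⟨(x, y), h⟩ = true) a b

/-- `μ` is the law of a random graph order on `ℕ = {1, 2, 3, …}` with parameter `p`:
a probability measure on edge configurations whose coordinates are independent
Bernoulli(`p`) random variables. -/
structure IsRandomGraphOrderMeasure (μ : Measure (GraphOrderEdge → Bool)) (p : ℝ)
    (hp : 0 < p ∧ p < 1) : Prop where
  isProb : IsProbabilityMeasure μ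
  indep : iIndepFun (fun e (ω : GraphOrderEdge → Bool) => ω e) μ
  bernoulli : ∀ e : GraphOrderEdge, μ.map (fun ω => ω e) =
    (PMF.bernoulli (Real.toNNReal p) (Real.toNNReal_le_one.mpr hp.2.le)).toMeasure

/-- Partial product of the Euler function: `λ_k(q) = ∏_{i=1}^k (1 - q^i)`, `λ_0(q) = 1`. -/
noncomputable def eulerLam (q : ℝ) (k : ℕ) : ℝ := ∏ i ∈ Finset.range k, (1 - q ^ (i + 1))

/-- The Euler function `κ(q) = ∏_{i=1}^∞ (1 - q^i)`. -/
noncomputable def eulerKappa (q : ℝ) : ℝ := ∏' i : ℕ, (1 - q ^ (i + 1))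

/-! The relation `≺_ω` only increases, so every `m < k` lies below `k` exactly when each `m` in
`[1, k)` has an edge to some vertex of `(m, k]`: follow such edges upwards until `k` is reached.
These row events depend on pairwise disjoint sets of edges, hence are independent, and row `m`
has `k - m` edges, so it misses with probability `q ^ (k - m)`. -/

theorem ProbabilityTheory.iIndepFun.measure_biInter_preimage_disjoint_eq_prod {Ω ι κ : Type*}
    {mΩ : MeasurableSpace Ω} {μ : Measure Ω} {β : ι → Type*} {mβ : ∀ i, MeasurableSpace (β i)}
    {X : ∀ i, Ω → β i} (hX : iIndepFun X μ) (hXm : ∀ i, Measurable (X i))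
    {S : κ → Finset ι} {I : Finset κ} (hS : (I : Set κ).PairwiseDisjoint S)
    {A : ∀ j, Set (∀ e : S j, β e)} (hA : ∀ j ∈ I, MeasurableSet (A j)) :
    μ (⋂ j ∈ I, (fun ω (e : S j) => X e ω) ⁻¹' A j) =
      ∏ j ∈ I, μ ((fun ω (e : S j) => X e ω) ⁻¹' A j) := by
  classical
  induction I using Finset.induction_on with
  | empty => simp [hX.isProbabilityMeasure]
  | insert a I ha ih =>
    rw [Finset.set_biInter_insert, Finset.prod_insert ha,
      ← ih (hS.subset (by simp)) fun j hj => hA j (Finset.mem_insert_of_mem hj)]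
    have hdisj : Disjoint (S a) (I.biUnion S) := by
      refine (Finset.disjoint_biUnion_right _ _ _).2 fun j hj => hS (by simp) (by simp [hj]) ?_
      rintro rfl; exact ha hj
    let B : Set (∀ e : I.biUnion S, β e) :=
      ⋂ j : I, (fun v (e : S j) => v ⟨e, Finset.mem_biUnion.2 ⟨j, j.2, e.2⟩⟩) ⁻¹' A j
    have hB : MeasurableSet B :=
      .iInter fun j => (measurable_pi_lambda _ fun e => measurable_pi_apply _)
        (hA j (Finset.mem_insert_of_mem j.2))
    have hpre : ⋂ j ∈ I, (fun ω (e : S j) => X e ω) ⁻¹' A j =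
        (fun ω (e : I.biUnion S) => X e ω) ⁻¹' B := by
      ext ω; simp [B]
    rw [hpre]
    exact (hX.indepFun_finset _ _ hdisj hXm).measure_inter_preimage_eq_mul _ B
      (hA a (Finset.mem_insert_self a I)) hB

lemma eulerLam_sub_one_eq_prod_Ico (q : ℝ) (k : ℕ) :
    eulerLam q (k - 1) = ∏ i ∈ Finset.Ico 1 k, (1 - q ^ (k - i)) := by
  rw [Finset.prod_Ico_reflect (fun j => 1 - q ^ j) 1 le_self_add, Nat.add_sub_cancel,
    Nat.add_sub_cancel_left, Finset.prod_Ico_eq_prod_range, eulerLam]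
  simp only [add_comm 1]

namespace GraphOrderEdge

def outEdges (i k : ℕ) : Finset GraphOrderEdge :=
  ({i} ×ˢ Finset.Ioc i k).subtype fun ij => 1 ≤ ij.1 ∧ ij.1 < ij.2

lemma mem_outEdges {i k : ℕ} {e : GraphOrderEdge} :
    e ∈ outEdges i k ↔ e.1.1 = i ∧ e.1.2 ≤ k := by
  obtain ⟨⟨a, b⟩, ha, hab⟩ := e
  simp only [outEdges, Finset.mem_subtype, Finset.mem_product, Finset.mem_singleton,
    Finset.mem_Ioc]
  omega

lemma card_outEdges {i : ℕ} (hi : 1 ≤ i) (k : ℕ) : (outEdges i k).card = k - i := by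
  rw [outEdges, Finset.card_subtype, Finset.filter_true_of_mem, Finset.card_product,
    Finset.card_singleton, Nat.card_Ioc, one_mul]
  simp only [Finset.mem_product, Finset.mem_singleton, Finset.mem_Ioc]
  omega

lemma pairwiseDisjoint_outEdges (s : Set ℕ) (k : ℕ) : s.PairwiseDisjoint (outEdges · k) :=
  fun _ _ _ _ hij => Finset.disjoint_left.2 fun _ hi hj =>
    hij ((mem_outEdges.1 hi).1.symm.trans (mem_outEdges.1 hj).1)

end GraphOrderEdge

open GraphOrderEdge

lemma GraphOrderRel.lt {ω : GraphOrderEdge → Bool} {a b : ℕ} (h : GraphOrderRel ω a b) :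
    a < b := by
  induction h with
  | single hab => exact hab.1.2
  | tail _ hbc ih => exact ih.trans hbc.1.2

lemma GraphOrderRel.of_forall_exists_outEdges {ω : GraphOrderEdge → Bool} {k : ℕ}
    (h : ∀ i ∈ Finset.Ico 1 k, ∃ e : outEdges i k, ω e = true) {m : ℕ}
    (hm : m ∈ Finset.Ico 1 k) : GraphOrderRel ω m k := by
  obtain ⟨⟨⟨⟨i, j⟩, hij⟩, he⟩, hω⟩ := h m hm
  obtain ⟨him, hjk⟩ := mem_outEdges.1 he
  dsimp only at him hij hjk
  subst i
  have step : ∃ h : 1 ≤ m ∧ m < j, ω ⟨(m, j), h⟩ = true := ⟨hij, hω⟩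
  rcases hjk.eq_or_lt with rfl | hjk
  · exact .single step
  · exact .head step (of_forall_exists_outEdges h (Finset.mem_Ico.2 ⟨by omega, hjk⟩))
termination_by k - m
decreasing_by omega

lemma forall_graphOrderRel_iff (ω : GraphOrderEdge → Bool) (k : ℕ) :
    (∀ m, 1 ≤ m → m < k → GraphOrderRel ω m k) ↔
      ∀ i ∈ Finset.Ico 1 k, ∃ e : outEdges i k, ω e = true := by
  refine ⟨fun h i hi => ?_, fun h m hm hmk =>
    .of_forall_exists_outEdges h (Finset.mem_Ico.2 ⟨hm, hmk⟩)⟩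
  obtain ⟨hi1, hik⟩ := Finset.mem_Ico.1 hi
  obtain ⟨j, ⟨hij, hω⟩, hjk⟩ := Relation.TransGen.head'_iff.1 (h i hi1 hik)
  have hjk : j ≤ k := (Relation.reflTransGen_iff_eq_or_transGen.1 hjk).elim (·.ge)
    fun h => (GraphOrderRel.lt h).le
  exact ⟨⟨_, mem_outEdges.2 ⟨rfl, hjk⟩⟩, hω⟩

namespace IsRandomGraphOrderMeasure

variable {μ : Measure (GraphOrderEdge → Bool)} {p : ℝ} {hp : 0 < p ∧ p < 1}
  (hμ : IsRandomGraphOrderMeasure μ p hp)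
include hμ

lemma measure_eq_false (e : GraphOrderEdge) : μ {ω | ω e = false} = ENNReal.ofReal (1 - p) := by
  change μ ((fun ω => ω e) ⁻¹' {false}) = _
  rw [← Measure.map_apply (measurable_pi_apply e) (measurableSet_singleton false),
    hμ.bernoulli e, PMF.toMeasure_apply_singleton _ _ (measurableSet_singleton _)]
  simp only [PMF.bernoulli, PMF.ofFintype_apply, cond_false]
  rw [ENNReal.ofReal_sub _ hp.1.le, ENNReal.ofReal_one, ENNReal.ofReal]

lemma measure_forall_eq_false (S : Finset GraphOrderEdge) :
    μ {ω | ∀ e : S, ω e = false} = ENNReal.ofReal ((1 - p) ^ S.card) := by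
  have hS : {ω | ∀ e : S, ω e = false} =
      ⋂ e ∈ S, (fun ω : GraphOrderEdge → Bool => ω e) ⁻¹' {false} := by
    ext ω; simp
  rw [hS, hμ.indep.measure_inter_preimage_eq_mul S fun _ _ => measurableSet_singleton false,
    ENNReal.ofReal_pow (by linarith [hp.2])]
  exact Finset.prod_eq_pow_card fun e _ => hμ.measure_eq_false e

lemma measure_exists_eq_true (S : Finset GraphOrderEdge) :
    μ {ω | ∃ e : S, ω e = true} = ENNReal.ofReal (1 - (1 - p) ^ S.card) := by
  have := hμ.isProb
  have hcompl : {ω : GraphOrderEdge → Bool | ∃ e : S, ω e = true} =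
      {ω | ∀ e : S, ω e = false}ᶜ := by
    ext ω; simp only [Set.mem_ofPred_eq, Set.mem_compl_iff, not_forall, Bool.not_eq_false]
  have hmeas : MeasurableSet {ω : GraphOrderEdge → Bool | ∀ e : S, ω e = false} := by
    measurability
  rw [hcompl, prob_compl_eq_one_sub hmeas, hμ.measure_forall_eq_false, ← ENNReal.ofReal_one,
    ← ENNReal.ofReal_sub _ (pow_nonneg (by linarith [hp.2]) _)]

end IsRandomGraphOrderMeasure

theorem prob_rel_all_below_eq_general (p q : ℝ) (hp : 0 < p ∧ p < 1) (hq : q = 1 - p)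
    (μ : Measure (GraphOrderEdge → Bool)) (hμ : IsRandomGraphOrderMeasure μ p hp)
    (k : ℕ) :
    μ {ω | ∀ m : ℕ, 1 ≤ m → m < k → GraphOrderRel ω m k} =
      ENNReal.ofReal (eulerLam q (k - 1)) := by
  subst hq
  have hevent : {ω | ∀ m : ℕ, 1 ≤ m → m < k → GraphOrderRel ω m k} =
      ⋂ i ∈ Finset.Ico 1 k, (fun ω (e : outEdges i k) => ω e) ⁻¹' {v | ∃ e, v e = true} := by
    ext ω; simp [forall_graphOrderRel_iff]
  have hq0 : 0 ≤ 1 - p := by linarith [hp.2]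
  rw [hevent, hμ.indep.measure_biInter_preimage_disjoint_eq_prod measurable_pi_apply
      (pairwiseDisjoint_outEdges _ k) fun i _ => (Set.toFinite _).measurableSet,
    eulerLam_sub_one_eq_prod_Ico, ENNReal.ofReal_prod_of_nonneg fun _ _ =>
      sub_nonneg.2 (pow_le_one₀ hq0 (by linarith [hp.1]))]
  refine Finset.prod_congr rfl fun i hi => ?_
  rw [← card_outEdges (Finset.mem_Ico.1 hi).1 k]
  exact hμ.measure_exists_eq_true _

/-- In a random graph order on `ℕ = {1, 2, …}` with parameter `0 < p < 1` and `q = 1 - p`,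
for every `k ≥ 1` the probability that `k` is related to every element `m < k`
(i.e. `m ≺_ω k` for all `1 ≤ m < k`) equals `λ_{k-1}(q) = ∏_{i=1}^{k-1} (1 - q^i)`. -/
theorem prob_rel_all_below_eq (p q : ℝ) (hp : 0 < p ∧ p < 1) (hq : q = 1 - p)
    (μ : Measure (GraphOrderEdge → Bool)) (hμ : IsRandomGraphOrderMeasure μ p hp)
    (k : ℕ) (hk : 1 ≤ k) :
    μ {ω | ∀ m : ℕ, 1 ≤ m → m < k → GraphOrderRel ω m k} =
      ENNReal.ofReal (eulerLam q (k - 1)) :=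
  prob_rel_all_below_eq_general p q hp hq μ hμ k
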